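/- arXiv:math/0501463 — 3 statements merged into one kernel-verified Lean document; each statement's English description precedes it below -/
import Mathlib

section
/- Let X be a normal Tychonoff space, viewed inside its Stone–Čech compactification βX. Suppose α : [0,1] → βX is continuous with α(t) ∈ X for all t ∈ [0,1) and α(1) ∈ βX \ X. If (tₙ) is a sequence of distinct points of [0,1) with α(tₙ) distinct in X and tₙ → 1, then there is no continuous function F : X → [0,1] with F(α(tₙ)) = n mod 2 for all n. (Key step: any such F extends continuously to βX, contradicting convergence of α(tₙ) to α(1).) -/
/-!
A continuous `F : X → [0,1]` extends to a continuous map on `βX`. Since `α (t n) → α 1` in `βX`,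
the values `F (α (t n))` would then converge to the value of the extension at `α 1`; but they
alternate between `0` and `1`.
-/

open Filter Topology

theorem tendsto_comp_of_tendsto_stoneCechUnit {X Y ι : Type*} [TopologicalSpace X]
    [TopologicalSpace Y] [CompactSpace Y] [T2Space Y] {f : X → Y} (hf : Continuous f)
    {l : Filter ι} {x : ι → X} {p : StoneCech X} (hx : Tendsto (stoneCechUnit ∘ x) l (𝓝 p)) :
    Tendsto (f ∘ x) l (𝓝 (stoneCechExtend hf p)) := by
  have h := ((continuous_stoneCechExtend hf).tendsto p).comp hx
  rwa [← Function.comp_assoc, stoneCechExtend_extends] at h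

theorem not_tendsto_ite_mod_two {Y : Type*} [TopologicalSpace Y] [T2Space Y] {a b : Y}
    (hab : a ≠ b) (c : Y) :
    ¬ Tendsto (fun n : ℕ => if n % 2 = 0 then a else b) atTop (𝓝 c) := by
  intro h
  have h_even : Tendsto (fun _ : ℕ => a) atTop (𝓝 c) := by
    simpa [Function.comp_def] using h.comp (tendsto_id.atTop_mul_const' two_pos)
  have h_odd : Tendsto (fun _ : ℕ => b) atTop (𝓝 c) := by
    simpa [Function.comp_def, Nat.add_mod] using
      h.comp (tendsto_add_atTop_nat 1 |>.comp (tendsto_id.atTop_mul_const' two_pos))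
  exact hab <| (tendsto_const_nhds_iff.mp h_even).trans (tendsto_const_nhds_iff.mp h_odd).symm

theorem no_alternating_extension_along_path_general
    {X : Type*} [TopologicalSpace X]
    (α : C(unitInterval, StoneCech X))
    (t : ℕ → unitInterval)
    (ht_lim : Filter.Tendsto t Filter.atTop (nhds 1))
    (hmem : ∀ n, α (t n) ∈ Set.range (stoneCechUnit : X → StoneCech X)) :
    ¬ ∃ F : C(X, ℝ), (∀ x, F x ∈ Set.Icc (0 : ℝ) 1) ∧
      ∀ n : ℕ, ∀ x : X, stoneCechUnit x = α (t n) →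
        F x = if n % 2 = 0 then 0 else 1 := by
  rintro ⟨F, hF, hval⟩
  choose x hx using hmem
  have hx_lim : Tendsto (stoneCechUnit ∘ x) atTop (𝓝 (α 1)) := by
    simpa only [Function.comp_def, hx] using (α.continuous.tendsto 1).comp ht_lim
  have hF_lim := tendsto_comp_of_tendsto_stoneCechUnit (F.continuous.codRestrict hF) hx_lim
  refine not_tendsto_ite_mod_two (zero_ne_one' ℝ) _
    (((continuous_subtype_val.tendsto _).comp hF_lim).congr fun n => ?_)
  exact hval n _ (hx n)

theorem no_alternating_extension_along_path
    {X : Type*} [TopologicalSpace X] [NormalSpace X] [T1Space X]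
    [CompletelyRegularSpace X]
    (α : C(unitInterval, StoneCech X))
    (hX : ∀ t : unitInterval, t < 1 → α t ∈ Set.range (stoneCechUnit : X → StoneCech X))
    (h1 : α 1 ∉ Set.range (stoneCechUnit : X → StoneCech X))
    (t : ℕ → unitInterval)
    (ht_mono : StrictMono t) (ht_lt : ∀ n, t n < 1)
    (ht_lim : Filter.Tendsto t Filter.atTop (nhds 1))
    (hdist : Function.Injective (fun n => α (t n)))
    (hmem : ∀ n, α (t n) ∈ Set.range (stoneCechUnit : X → StoneCech X)) :
    ¬ ∃ F : C(X, ℝ), (∀ x, F x ∈ Set.Icc (0 : ℝ) 1) ∧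
      ∀ n : ℕ, ∀ x : X, stoneCechUnit x = α (t n) →
        F x = if n % 2 = 0 then 0 else 1 :=
  no_alternating_extension_along_path_general α t ht_lim hmem
end

section
/- A discrete topological space of countable cardinality is realcompact: every ring homomorphism from C(X, ℝ) to ℝ that is the identity on constants is given by evaluation at a point of X. (Equivalently for Lean: every ℝ-algebra homomorphism φ : C(ℕ, ℝ) → ℝ, where ℕ has the discrete topology, is evaluation at some n ∈ ℕ.) -/
theorem nat_discrete_realcompact
    (φ : C(ℕ, ℝ) →ₐ[ℝ] ℝ) :
    ∃ n : ℕ, ∀ f : C(ℕ, ℝ), φ f = f n := by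
  set f : C(ℕ, ℝ) := ⟨fun m => (m : ℝ), continuous_of_discreteTopology⟩ with hf
  set c : ℝ := φ f with hc
  -- c is a natural number
  have hex : ∃ n : ℕ, (n : ℝ) = c := by
    by_contra h
    push_neg at h
    set g : C(ℕ, ℝ) := ⟨fun m => ((m : ℝ) - c)⁻¹, continuous_of_discreteTopology⟩ with hg
    have hmul : (f - algebraMap ℝ C(ℕ, ℝ) c) * g = 1 := by
      ext m
      have hne : (m : ℝ) - c ≠ 0 := sub_ne_zero.mpr (h m)
      simp [hf, hg, mul_inv_cancel₀ hne]
    have := congrArg φ hmul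
    rw [map_mul, map_one, map_sub, AlgHom.commutes] at this
    simp only [Algebra.algebraMap_self_apply, ← hc, sub_self, zero_mul] at this
    exact zero_ne_one this
  obtain ⟨n, hn⟩ := hex
  refine ⟨n, fun g => ?_⟩
  set u : C(ℕ, ℝ) := ⟨fun m => if m = n then 0 else (g m - g n) / ((m : ℝ) - n),
    continuous_of_discreteTopology⟩ with hu
  have key : g - algebraMap ℝ C(ℕ, ℝ) (g n) = u * (f - algebraMap ℝ C(ℕ, ℝ) ((n : ℕ) : ℝ)) := by
    ext m
    by_cases hm : m = n
    · simp [hu, hf, hm]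
    · have hne : (m : ℝ) - (n : ℝ) ≠ 0 := by
        rw [sub_ne_zero]
        exact_mod_cast hm
      simp only [hu, hf, ContinuousMap.sub_apply, ContinuousMap.mul_apply,
        ContinuousMap.coe_mk, if_neg hm]
      field_simp
      simp
    -- done cases
  have := congrArg φ key
  rw [map_sub, map_mul, map_sub, AlgHom.commutes, AlgHom.commutes] at this
  simp only [Algebra.algebraMap_self_apply, ← hc, ← hn, sub_self, mul_zero] at this
  linarith [this]
end

section
/- Let X be a Tychonoff space embedded in βX. If every continuous path α : [0,1] → βX with α(0) ∈ X satisfies α([0,1]) ⊆ X, then for every x₀ ∈ X the inclusion X ↪ βX induces an isomorphism π₁(X, x₀) → π₁(βX, x₀). -/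
/-!
Since `X` is Tychonoff, `stoneCechUnit` is an embedding, so a continuous map into `βX` whose
image lies in `X` lifts continuously to `X`. Every path in `βX` from a point of `X` and every
slice of a homotopy between images of paths of `X` lie in `X` by hypothesis, so both lift; as
`stoneCechUnit` is injective, the lifts have the right endpoints. Hence the map on homotopy
classes of paths is surjective and injective.
-/

open CategoryTheory Topology
open scoped FundamentalGroupoid

/-- The homomorphism on fundamental groups induced by a continuous map. -/
noncomputable def inducedFundamentalGroupHom {X Y : Type} [TopologicalSpace X]
    [TopologicalSpace Y] (f : C(X, Y)) (x₀ : X) :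
    FundamentalGroup X x₀ →* FundamentalGroup Y (f x₀) :=
  CategoryTheory.Functor.mapEnd
    (C := FundamentalGroupoid X) (D := FundamentalGroupoid Y)
    (X := FundamentalGroupoid.mk x₀)
    (FundamentalGroupoid.fundamentalGroupoidFunctor.map
      (X := TopCat.of X) (Y := TopCat.of Y) (TopCat.ofHom f))

theorem Topology.IsEmbedding.exists_continuousMap_lift {X Y A : Type*} [TopologicalSpace X]
    [TopologicalSpace Y] [TopologicalSpace A] {f : X → Y} (hf : IsEmbedding f)
    (g : C(A, Y)) (hg : Set.range g ⊆ Set.range f) : ∃ g' : C(A, X), f ∘ g' = g := by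
  choose g' hg' using fun a => hg ⟨a, rfl⟩
  have hfg' : f ∘ g' = g := funext hg'
  exact ⟨⟨g', hf.continuous_iff.2 (hfg' ▸ g.continuous)⟩, hfg'⟩

namespace Path.Homotopic

variable {X Y : Type*} [TopologicalSpace X] [TopologicalSpace Y] {f : C(X, Y)}

theorem of_map_of_isEmbedding (hf : IsEmbedding f)
    (hpath : ∀ α : C(unitInterval, Y), α 0 ∈ Set.range f → Set.range α ⊆ Set.range f)
    {x y : X} {p q : Path x y}
    (h : (p.map f.continuous).Homotopic (q.map f.continuous)) : p.Homotopic q := by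
  obtain ⟨H⟩ := h
  obtain ⟨K, hK⟩ := hf.exists_continuousMap_lift H.toContinuousMap <| by
    rintro _ ⟨⟨s, t⟩, rfl⟩
    exact hpath (H.eval s).toContinuousMap ⟨x, by simp⟩ ⟨t, rfl⟩
  have hKH (st) : f (K st) = H st := congrFun hK st
  refine ⟨{ toContinuousMap := K
            map_zero_left t := hf.injective ((hKH _).trans (by simp))
            map_one_left t := hf.injective ((hKH _).trans (by simp))
            prop' s t ht := hf.injective ((hKH _).trans ((H.eq_fst s ht).trans (by simp))) }⟩

theorem exists_map_eq_of_isEmbedding (hf : IsEmbedding f)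
    (hpath : ∀ α : C(unitInterval, Y), α 0 ∈ Set.range f → Set.range α ⊆ Set.range f)
    {x y : X} (γ : Path (f x) (f y)) : ∃ p : Path x y, p.map f.continuous = γ := by
  obtain ⟨g, hg⟩ := hf.exists_continuousMap_lift γ.toContinuousMap
    (hpath γ.toContinuousMap ⟨x, by simp⟩)
  have hgγ (t) : f (g t) = γ t := congrFun hg t
  exact ⟨⟨g, hf.injective (by simp [hgγ]), hf.injective (by simp [hgγ])⟩, Path.ext (funext hgγ)⟩

theorem Quotient.map_bijective_of_isEmbedding (hf : IsEmbedding f)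
    (hpath : ∀ α : C(unitInterval, Y), α 0 ∈ Set.range f → Set.range α ⊆ Set.range f)
    {x y : X} : Function.Bijective fun P : Path.Homotopic.Quotient x y => P.map f := by
  constructor
  · rintro ⟨p⟩ ⟨q⟩ h
    exact Quotient.sound (of_map_of_isEmbedding hf hpath (Quotient.exact h))
  · rintro ⟨γ⟩
    obtain ⟨p, rfl⟩ := exists_map_eq_of_isEmbedding hf hpath γ
    exact ⟨⟦p⟧, rfl⟩

end Path.Homotopic

theorem stoneCech_inclusion_induces_pi1_iso
    {X : Type} [TopologicalSpace X] [T1Space X] [CompletelyRegularSpace X]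
    (hpath : ∀ α : C(unitInterval, StoneCech X),
      α 0 ∈ Set.range (stoneCechUnit : X → StoneCech X) →
      Set.range α ⊆ Set.range (stoneCechUnit : X → StoneCech X))
    (x₀ : X) :
    Function.Bijective
      (inducedFundamentalGroupHom
        (⟨stoneCechUnit, continuous_stoneCechUnit⟩ : C(X, StoneCech X)) x₀) := by
  have : T35Space X := ⟨⟩
  -- `inducedFundamentalGroupHom f x₀` is definitionally `fun P => P.map f` on loop classes.
  exact Path.Homotopic.Quotient.map_bijective_of_isEmbedding isEmbedding_stoneCechUnit hpath
end
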